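/- For the cigar metric $h = dt^2 + \tanh^2(t)\,d\theta^2$ on $(0,\infty)\times\mathbb{R}$ and $f(t,\theta) = -2\log(\cosh t)$, the covariant Hessian of $f$ equals $-\tfrac{2}{\cosh^2 t}\,h$: namely $f_{:11} = -2/\cosh^2 t$, $f_{:12} = f_{:21} = 0$, $f_{:22} = -2\tanh^2(t)/\cosh^2(t)$. -/
import Mathlib


open Matrix

private lemma d_logcosh (u : ℝ) :
    deriv (fun v => -2 * Real.log (Real.cosh v)) u = -2 * Real.tanh u := by
  have h : HasDerivAt (fun v => -2 * Real.log (Real.cosh v))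
      (-2 * (Real.sinh u / Real.cosh u)) u := by
    have := ((Real.hasDerivAt_cosh u).log (Real.cosh_pos u).ne').const_mul (-2 : ℝ)
    simpa using this
  rw [h.deriv, Real.tanh_eq_sinh_div_cosh]

private lemma d_tanh (u : ℝ) :
    deriv (fun v => -2 * Real.tanh v) u = -2 / Real.cosh u ^ 2 := by
  have h : HasDerivAt (fun v => -2 * Real.tanh v)
      (-2 * ((Real.cosh u * Real.cosh u - Real.sinh u * Real.sinh u) / Real.cosh u ^ 2)) u := by
    have h1 : HasDerivAt (fun v => Real.sinh v / Real.cosh v)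
        ((Real.cosh u * Real.cosh u - Real.sinh u * Real.sinh u) / Real.cosh u ^ 2) u :=
      (Real.hasDerivAt_sinh u).div (Real.hasDerivAt_cosh u) (Real.cosh_pos u).ne'
    have : (fun v => -2 * Real.tanh v) = fun v => -2 * (Real.sinh v / Real.cosh v) := by
      funext v; rw [Real.tanh_eq_sinh_div_cosh]
    rw [this]
    exact h1.const_mul (-2 : ℝ)
  rw [h.deriv]
  have : Real.cosh u * Real.cosh u - Real.sinh u * Real.sinh u = 1 := by
    have := Real.cosh_sq_sub_sinh_sq u; nlinarith [this]
  rw [this]; ring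

/-- Covariant Hessian of `f = −2 log(cosh t)` for the cigar metric:
`f₍:11₎ = −2/cosh²t`, `f₍:12₎ = f₍:21₎ = 0`, `f₍:22₎ = −2tanh²t/cosh²t`.
Coordinates: index `0 ↦ t`, index `1 ↦ θ`; `f_{:ij} = ∂_i∂_j f − Γ^k_{ij}∂_k f`. -/
theorem stmt14
    (f : (Fin 2 → ℝ) → ℝ) (hf : ∀ x, f x = -2 * Real.log (Real.cosh (x 0)))
    (pd : Fin 2 → ((Fin 2 → ℝ) → ℝ) → (Fin 2 → ℝ) → ℝ)
    (hpdiff : ∀ i g x, pd i g x = deriv (fun u => g (Function.update x i u)) (x i))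
    (Γ : Fin 2 → Fin 2 → Fin 2 → ℝ → ℝ)
    (hΓ : ∀ t, Γ 1 0 1 t = 2 / Real.sinh (2 * t) ∧ Γ 1 1 0 t = 2 / Real.sinh (2 * t) ∧
      Γ 0 1 1 t = -(Real.tanh t / Real.cosh t ^ 2) ∧
      Γ 0 0 0 t = 0 ∧ Γ 1 0 0 t = 0 ∧ Γ 0 0 1 t = 0 ∧ Γ 0 1 0 t = 0 ∧ Γ 1 1 1 t = 0)
    (Hess : Fin 2 → Fin 2 → (Fin 2 → ℝ) → ℝ)
    (hHess : ∀ i j x, Hess i j x = pd i (pd j f) x - ∑ k, Γ k i j (x 0) * pd k f x) :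
    ∀ x : Fin 2 → ℝ, 0 < x 0 →
      Hess 0 0 x = -2 / Real.cosh (x 0) ^ 2 ∧ Hess 0 1 x = 0 ∧ Hess 1 0 x = 0 ∧
        Hess 1 1 x = -2 * Real.tanh (x 0) ^ 2 / Real.cosh (x 0) ^ 2 := by
  -- first partial derivatives
  have hpd0 : ∀ x : Fin 2 → ℝ, pd 0 f x = -2 * Real.tanh (x 0) := by
    intro x
    rw [hpdiff]
    have : (fun u => f (Function.update x 0 u)) = fun u => -2 * Real.log (Real.cosh u) := by
      funext u; rw [hf]; simp
    rw [this, d_logcosh]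
  have hpd1 : ∀ x : Fin 2 → ℝ, pd 1 f x = 0 := by
    intro x
    rw [hpdiff]
    have : (fun u => f (Function.update x 1 u)) = fun _ => -2 * Real.log (Real.cosh (x 0)) := by
      funext u; rw [hf]; simp [Function.update_of_ne]
    rw [this, deriv_const]
  -- second partial derivatives
  have hpd00 : ∀ x : Fin 2 → ℝ, pd 0 (pd 0 f) x = -2 / Real.cosh (x 0) ^ 2 := by
    intro x
    rw [hpdiff]
    have : (fun u => pd 0 f (Function.update x 0 u)) = fun u => -2 * Real.tanh u := by
      funext u; rw [hpd0]; simp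
    rw [this, d_tanh]
  have hpd10 : ∀ x : Fin 2 → ℝ, pd 1 (pd 0 f) x = 0 := by
    intro x
    rw [hpdiff]
    have : (fun u => pd 0 f (Function.update x 1 u)) = fun _ => -2 * Real.tanh (x 0) := by
      funext u; rw [hpd0]; simp [Function.update_of_ne]
    rw [this, deriv_const]
  have hpdi1 : ∀ (i : Fin 2) (x : Fin 2 → ℝ), pd i (pd 1 f) x = 0 := by
    intro i x
    rw [hpdiff]
    have : (fun u => pd 1 f (Function.update x i u)) = fun _ => (0 : ℝ) := by
      funext u; rw [hpd1]
    rw [this, deriv_const]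
  intro x hx
  obtain ⟨h1, h2, h3, h4, h5, h6, h7, h8⟩ := hΓ (x 0)
  refine ⟨?_, ?_, ?_, ?_⟩ <;>
    rw [hHess] <;>
    simp [Fin.sum_univ_two, hpd0, hpd1, hpd00, hpd10, hpdi1, h1, h2, h3, h4, h5, h6, h7, h8] <;>
    ring
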